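/- There exists a primitive embedding ι of the lattice U ⊕ U ⊕ A₂ (ℤ⁶ with block-diagonal Gram matrix with blocks [[0,1],[1,0]], [[0,1],[1,0]], [[−2,1],[1,−2]]) into the K3 lattice Λ_K3 such that the orthogonal complement of ι(ℤ⁶) in Λ_K3, equipped with the restricted bilinear form, is isometric to the lattice U ⊕ E₆ ⊕ E₈ (ℤ¹⁶ with block-diagonal Gram matrix with blocks U, E₆, E₈). -/
import Mathlib


open Matrix

/-- The hyperbolic lattice `U`. -/
def U : Matrix (Fin 2) (Fin 2) ℤ := !![0, 1; 1, 0]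

/-- The root lattice `A₁` (negative definite). -/
def A1 : Matrix (Fin 1) (Fin 1) ℤ := !![-2]

/-- The root lattice `A₂` (negative definite). -/
def A2 : Matrix (Fin 2) (Fin 2) ℤ := !![-2, 1; 1, -2]

/-- The root lattice `A₆` (negative definite). -/
def A6 : Matrix (Fin 6) (Fin 6) ℤ :=
  !![-2, 1, 0, 0, 0, 0;
    1, -2, 1, 0, 0, 0;
    0, 1, -2, 1, 0, 0;
    0, 0, 1, -2, 1, 0;
    0, 0, 0, 1, -2, 1;
    0, 0, 0, 0, 1, -2]

/-- The lattice `C₈⁶` of Nishiyama's lemma. -/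
def C86 : Matrix (Fin 2) (Fin 2) ℤ := !![-4, 1; 1, -2]

/-- The root lattice `E₈` (negative of the Cartan matrix, Bourbaki numbering). -/
def E8 : Matrix (Fin 8) (Fin 8) ℤ :=
  !![-2, 0, 1, 0, 0, 0, 0, 0;
    0, -2, 0, 1, 0, 0, 0, 0;
    1, 0, -2, 1, 0, 0, 0, 0;
    0, 1, 1, -2, 1, 0, 0, 0;
    0, 0, 0, 1, -2, 1, 0, 0;
    0, 0, 0, 0, 1, -2, 1, 0;
    0, 0, 0, 0, 0, 1, -2, 1;
    0, 0, 0, 0, 0, 0, 1, -2]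

/-- The root lattice `E₇` (nodes 1–7 of `E₈` in Bourbaki numbering). -/
def E7 : Matrix (Fin 7) (Fin 7) ℤ :=
  !![-2, 0, 1, 0, 0, 0, 0;
    0, -2, 0, 1, 0, 0, 0;
    1, 0, -2, 1, 0, 0, 0;
    0, 1, 1, -2, 1, 0, 0;
    0, 0, 0, 1, -2, 1, 0;
    0, 0, 0, 0, 1, -2, 1;
    0, 0, 0, 0, 0, 1, -2]

/-- The root lattice `E₆` (nodes 1–6 of `E₈` in Bourbaki numbering). -/
def E6 : Matrix (Fin 6) (Fin 6) ℤ :=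
  !![-2, 0, 1, 0, 0, 0;
    0, -2, 0, 1, 0, 0;
    1, 0, -2, 1, 0, 0;
    0, 1, 1, -2, 1, 0;
    0, 0, 0, 1, -2, 1;
    0, 0, 0, 0, 1, -2]

/-- Block-diagonal (direct) sum of two Gram matrices. -/
def dsum {m n : ℕ} (A : Matrix (Fin m) (Fin m) ℤ) (B : Matrix (Fin n) (Fin n) ℤ) :
    Matrix (Fin (m + n)) (Fin (m + n)) ℤ :=
  Matrix.reindex finSumFinEquiv finSumFinEquiv (Matrix.fromBlocks A 0 0 B)

/-- The K3 lattice `Λ_K3 = U ⊕ U ⊕ U ⊕ E₈ ⊕ E₈`. -/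
def LambdaK3 : Matrix (Fin 22) (Fin 22) ℤ := dsum (dsum (dsum (dsum U U) U) E8) E8

/-- The lattice `U ⊕ U ⊕ A₂`. -/
def UUA2 : Matrix (Fin 6) (Fin 6) ℤ := dsum (dsum U U) A2

/-- The lattice `U ⊕ E₆ ⊕ E₈`. -/
def UE6E8 : Matrix (Fin 16) (Fin 16) ℤ := dsum (dsum U E6) E8

def Mmat : Matrix (Fin 22) (Fin 6) ℤ :=
  !![1, 0, 0, 0, 0, 0;
    0, 1, 0, 0, 0, 0;
    0, 0, 1, 0, 0, 0;
    0, 0, 0, 1, 0, 0;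
    0, 0, 0, 0, 0, 0;
    0, 0, 0, 0, 0, 0;
    0, 0, 0, 0, 0, 0;
    0, 0, 0, 0, 0, 0;
    0, 0, 0, 0, 0, 0;
    0, 0, 0, 0, 0, 0;
    0, 0, 0, 0, 0, 0;
    0, 0, 0, 0, 0, 0;
    0, 0, 0, 0, 0, 0;
    0, 0, 0, 0, 0, 0;
    0, 0, 0, 0, 0, -2;
    0, 0, 0, 0, 0, -3;
    0, 0, 0, 0, 0, -4;
    0, 0, 0, 0, 0, -6;
    0, 0, 0, 0, 0, -5;
    0, 0, 0, 0, 0, -4;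
    0, 0, 0, 0, 0, -3;
    0, 0, 0, 0, 1, -2]

def Nmat : Matrix (Fin 22) (Fin 16) ℤ :=
  !![0, 0, 0, 0, 0, 0, 0, 0, 0, 0, 0, 0, 0, 0, 0, 0;
    0, 0, 0, 0, 0, 0, 0, 0, 0, 0, 0, 0, 0, 0, 0, 0;
    0, 0, 0, 0, 0, 0, 0, 0, 0, 0, 0, 0, 0, 0, 0, 0;
    0, 0, 0, 0, 0, 0, 0, 0, 0, 0, 0, 0, 0, 0, 0, 0;
    1, 0, 0, 0, 0, 0, 0, 0, 0, 0, 0, 0, 0, 0, 0, 0;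
    0, 1, 0, 0, 0, 0, 0, 0, 0, 0, 0, 0, 0, 0, 0, 0;
    0, 0, 0, 0, 0, 0, 0, 0, 1, 0, 0, 0, 0, 0, 0, 0;
    0, 0, 0, 0, 0, 0, 0, 0, 0, 1, 0, 0, 0, 0, 0, 0;
    0, 0, 0, 0, 0, 0, 0, 0, 0, 0, 1, 0, 0, 0, 0, 0;
    0, 0, 0, 0, 0, 0, 0, 0, 0, 0, 0, 1, 0, 0, 0, 0;
    0, 0, 0, 0, 0, 0, 0, 0, 0, 0, 0, 0, 1, 0, 0, 0;
    0, 0, 0, 0, 0, 0, 0, 0, 0, 0, 0, 0, 0, 1, 0, 0;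
    0, 0, 0, 0, 0, 0, 0, 0, 0, 0, 0, 0, 0, 0, 1, 0;
    0, 0, 0, 0, 0, 0, 0, 0, 0, 0, 0, 0, 0, 0, 0, 1;
    0, 0, 1, 0, 0, 0, 0, 0, 0, 0, 0, 0, 0, 0, 0, 0;
    0, 0, 0, 1, 0, 0, 0, 0, 0, 0, 0, 0, 0, 0, 0, 0;
    0, 0, 0, 0, 1, 0, 0, 0, 0, 0, 0, 0, 0, 0, 0, 0;
    0, 0, 0, 0, 0, 1, 0, 0, 0, 0, 0, 0, 0, 0, 0, 0;
    0, 0, 0, 0, 0, 0, 1, 0, 0, 0, 0, 0, 0, 0, 0, 0;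
    0, 0, 0, 0, 0, 0, 0, 1, 0, 0, 0, 0, 0, 0, 0, 0;
    0, 0, 0, 0, 0, 0, 0, 0, 0, 0, 0, 0, 0, 0, 0, 0;
    0, 0, 0, 0, 0, 0, 0, 0, 0, 0, 0, 0, 0, 0, 0, 0]

def Lmat : Matrix (Fin 6) (Fin 22) ℤ :=
  !![1, 0, 0, 0, 0, 0, 0, 0, 0, 0, 0, 0, 0, 0, 0, 0, 0, 0, 0, 0, 0, 0;
    0, 1, 0, 0, 0, 0, 0, 0, 0, 0, 0, 0, 0, 0, 0, 0, 0, 0, 0, 0, 0, 0;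
    0, 0, 1, 0, 0, 0, 0, 0, 0, 0, 0, 0, 0, 0, 0, 0, 0, 0, 0, 0, 0, 0;
    0, 0, 0, 1, 0, 0, 0, 0, 0, 0, 0, 0, 0, 0, 0, 0, 0, 0, 0, 0, 0, 0;
    0, 0, 0, 0, 0, 0, 0, 0, 0, 0, 0, 0, 0, 0, 0, 2, -2, 0, 0, 0, 0, 1;
    0, 0, 0, 0, 0, 0, 0, 0, 0, 0, 0, 0, 0, 0, 0, 1, -1, 0, 0, 0, 0, 0]

def Pmat : Matrix (Fin 16) (Fin 22) ℤ :=
  !![0, 0, 0, 0, 1, 0, 0, 0, 0, 0, 0, 0, 0, 0, 0, 0, 0, 0, 0, 0, 0, 0;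
    0, 0, 0, 0, 0, 1, 0, 0, 0, 0, 0, 0, 0, 0, 0, 0, 0, 0, 0, 0, 0, 0;
    0, 0, 0, 0, 0, 0, 0, 0, 0, 0, 0, 0, 0, 0, 1, 0, 0, 0, 0, 0, -2, 2;
    0, 0, 0, 0, 0, 0, 0, 0, 0, 0, 0, 0, 0, 0, 0, 1, 0, 0, 0, 0, -1, 0;
    0, 0, 0, 0, 0, 0, 0, 0, 0, 0, 0, 0, 0, 0, 0, 0, 1, 0, 0, 0, -4, 4;
    0, 0, 0, 0, 0, 0, 0, 0, 0, 0, 0, 0, 0, 0, 0, 0, 0, 1, 0, 0, -4, 3;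
    0, 0, 0, 0, 0, 0, 0, 0, 0, 0, 0, 0, 0, 0, 0, 0, 0, 0, 1, 0, -3, 2;
    0, 0, 0, 0, 0, 0, 0, 0, 0, 0, 0, 0, 0, 0, 0, 0, 0, 0, 0, 1, -2, 1;
    0, 0, 0, 0, 0, 0, 1, 0, 0, 0, 0, 0, 0, 0, 0, 0, 0, 0, 0, 0, 0, 0;
    0, 0, 0, 0, 0, 0, 0, 1, 0, 0, 0, 0, 0, 0, 0, 0, 0, 0, 0, 0, 0, 0;
    0, 0, 0, 0, 0, 0, 0, 0, 1, 0, 0, 0, 0, 0, 0, 0, 0, 0, 0, 0, 0, 0;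
    0, 0, 0, 0, 0, 0, 0, 0, 0, 1, 0, 0, 0, 0, 0, 0, 0, 0, 0, 0, 0, 0;
    0, 0, 0, 0, 0, 0, 0, 0, 0, 0, 1, 0, 0, 0, 0, 0, 0, 0, 0, 0, 0, 0;
    0, 0, 0, 0, 0, 0, 0, 0, 0, 0, 0, 1, 0, 0, 0, 0, 0, 0, 0, 0, 0, 0;
    0, 0, 0, 0, 0, 0, 0, 0, 0, 0, 0, 0, 1, 0, 0, 0, 0, 0, 0, 0, 0, 0;
    0, 0, 0, 0, 0, 0, 0, 0, 0, 0, 0, 0, 0, 1, 0, 0, 0, 0, 0, 0, 0, 0]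

def Qmat : Matrix (Fin 22) (Fin 6) ℤ :=
  !![0, 1, 0, 0, 0, 0;
    1, 0, 0, 0, 0, 0;
    0, 0, 0, 1, 0, 0;
    0, 0, 1, 0, 0, 0;
    0, 0, 0, 0, 0, 0;
    0, 0, 0, 0, 0, 0;
    0, 0, 0, 0, 0, 0;
    0, 0, 0, 0, 0, 0;
    0, 0, 0, 0, 0, 0;
    0, 0, 0, 0, 0, 0;
    0, 0, 0, 0, 0, 0;
    0, 0, 0, 0, 0, 0;
    0, 0, 0, 0, 0, 0;
    0, 0, 0, 0, 0, 0;
    0, 0, 0, 0, 2, 2;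
    0, 0, 0, 0, 1, 2;
    0, 0, 0, 0, 4, 4;
    0, 0, 0, 0, 4, 5;
    0, 0, 0, 0, 3, 4;
    0, 0, 0, 0, 2, 3;
    0, 0, 0, 0, 1, 2;
    0, 0, 0, 0, 0, 1]


lemma dot_aux {m k : ℕ} (M : Matrix (Fin 22) (Fin m) ℤ) (B : Matrix (Fin 22) (Fin k) ℤ)
    (x : Fin m → ℤ) (w : Fin k → ℤ) :
    (M *ᵥ x) ⬝ᵥ (B *ᵥ w) = x ⬝ᵥ ((Mᵀ * B) *ᵥ w) := by
  conv_rhs => rw [← Matrix.mulVec_mulVec, Matrix.dotProduct_mulVec, Matrix.vecMul_transpose]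

lemma form_aux {m : ℕ} (M : Matrix (Fin 22) (Fin m) ℤ) (B : Matrix (Fin 22) (Fin 22) ℤ)
    (C : Matrix (Fin m) (Fin m) ℤ) (h : Mᵀ * B * M = C) (x y : Fin m → ℤ) :
    (M *ᵥ x) ⬝ᵥ (B *ᵥ (M *ᵥ y)) = x ⬝ᵥ (C *ᵥ y) := by
  rw [dot_aux, Matrix.mulVec_mulVec, h]

set_option maxHeartbeats 4000000 in
/-- There is a primitive embedding of U ⊕ U ⊕ A₂ into the K3 lattice whose orthogonal complement is isometric to U ⊕ E₆ ⊕ E₈. -/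
theorem primitive_embedding_UUA2_K3 :
    ∃ ι : (Fin 6 → ℤ) →ₗ[ℤ] (Fin 22 → ℤ),
      -- ι is an embedding of the lattice (U ⊕ U ⊕ A₂) into (Λ_K3) ...
      Function.Injective ι ∧
      (∀ x y : Fin 6 → ℤ, ι x ⬝ᵥ (LambdaK3 *ᵥ ι y) = x ⬝ᵥ (UUA2 *ᵥ y)) ∧
      -- ... which is primitive (its image is saturated, i.e. the cokernel is torsion-free) ...
      (∀ (v : Fin 22 → ℤ) (k : ℤ), k ≠ 0 → k • v ∈ LinearMap.range ι → v ∈ LinearMap.range ι) ∧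
      -- ... and the orthogonal complement of the image of ι, with the restricted form,
      -- is isometric to (U ⊕ E₆ ⊕ E₈): there is an injective linear map j preserving the forms
      -- whose range is exactly the orthogonal complement of the image of ι.
      ∃ j : (Fin 16 → ℤ) →ₗ[ℤ] (Fin 22 → ℤ),
        Function.Injective j ∧
        (∀ x y : Fin 16 → ℤ, j x ⬝ᵥ (LambdaK3 *ᵥ j y) = x ⬝ᵥ (UE6E8 *ᵥ y)) ∧
        (∀ v : Fin 22 → ℤ, v ∈ LinearMap.range j ↔ ∀ x : Fin 6 → ℤ, v ⬝ᵥ (LambdaK3 *ᵥ ι x) = 0) := by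
  have hM : Mmatᵀ * LambdaK3 * Mmat = UUA2 := by decide
  have hL : Lmat * Mmat = 1 := by decide
  have hN : Nmatᵀ * LambdaK3 * Nmat = UE6E8 := by decide
  have hNM : Nmatᵀ * (LambdaK3 * Mmat) = 0 := by decide
  have hPQ : Nmat * Pmat + Qmat * (Mmatᵀ * LambdaK3) = 1 := by decide
  refine ⟨Matrix.mulVecLin Mmat, ?_, ?_, ?_, Matrix.mulVecLin Nmat, ?_, ?_, ?_⟩
  · intro x y hxy
    have : Lmat *ᵥ (Mmat *ᵥ x) = Lmat *ᵥ (Mmat *ᵥ y) := congrArg _ hxy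
    simpa [Matrix.mulVec_mulVec, hL] using this
  · exact form_aux Mmat LambdaK3 UUA2 hM
  · rintro v k hk ⟨u, hu⟩
    refine ⟨Lmat *ᵥ v, ?_⟩
    have hu' : u = k • (Lmat *ᵥ v) := by
      calc u = (Lmat * Mmat) *ᵥ u := by rw [hL, Matrix.one_mulVec]
        _ = Lmat *ᵥ (Mmat *ᵥ u) := by rw [Matrix.mulVec_mulVec]
        _ = Lmat *ᵥ (k • v) := by rw [show Mmat *ᵥ u = k • v from hu]
        _ = k • (Lmat *ᵥ v) := Matrix.mulVec_smul _ _ _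
    have : k • (Mmat *ᵥ (Lmat *ᵥ v)) = k • v := by
      rw [← Matrix.mulVec_smul, ← hu']
      exact hu
    exact smul_right_injective (Fin 22 → ℤ) hk this
  · intro x y hxy
    have h1 : Nmatᵀ *ᵥ (Nmat *ᵥ x) = Nmatᵀ *ᵥ (Nmat *ᵥ y) := congrArg _ hxy
    have hNN : Nmatᵀ * Nmat = 1 := by decide
    simpa [Matrix.mulVec_mulVec, hNN] using h1
  · exact form_aux Nmat LambdaK3 UE6E8 hN
  · intro v
    constructor
    · rintro ⟨y, rfl⟩ x
      show (Nmat *ᵥ y) ⬝ᵥ (LambdaK3 *ᵥ (Mmat *ᵥ x)) = 0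
      rw [Matrix.mulVec_mulVec, dot_aux, hNM, Matrix.zero_mulVec, dotProduct_zero]
    · intro h
      have hv : (Mmatᵀ * LambdaK3) *ᵥ v = 0 := by
        funext i
        have hi := h (Pi.single i 1)
        have : v ⬝ᵥ ((LambdaK3 * Mmat) *ᵥ Pi.single i 1) = 0 := by
          rw [← Matrix.mulVec_mulVec]; exact hi
        rw [Matrix.dotProduct_mulVec, dotProduct_single] at this
        have hvm : (Mmatᵀ * LambdaK3) *ᵥ v = v ᵥ* (LambdaK3 * Mmat) := by
          rw [← Matrix.mulVec_transpose, Matrix.transpose_mul,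
            show LambdaK3ᵀ = LambdaK3 from by decide]
        rw [hvm]
        simpa using this
      refine ⟨Pmat *ᵥ v, ?_⟩
      show Nmat *ᵥ (Pmat *ᵥ v) = v
      calc Nmat *ᵥ (Pmat *ᵥ v) = (Nmat * Pmat) *ᵥ v + Qmat *ᵥ ((Mmatᵀ * LambdaK3) *ᵥ v) := by
            rw [hv, Matrix.mulVec_zero, add_zero, Matrix.mulVec_mulVec]
        _ = (Nmat * Pmat) *ᵥ v + (Qmat * (Mmatᵀ * LambdaK3)) *ᵥ v := by rw [Matrix.mulVec_mulVec]
        _ = (Nmat * Pmat + Qmat * (Mmatᵀ * LambdaK3)) *ᵥ v := (Matrix.add_mulVec _ _ _).symm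
        _ = v := by rw [hPQ, Matrix.one_mulVec]
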